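/- Let {A_n}_n be a matrix-sequence with A_n ∈ ℂ^{d_n×d_n'}, where d_n and d_n' are monotonically increasing integer sequences, and let {{B_{n,t}}_n}_{t>0} be an a.c.s. for {A_n}_n. Assume that for every t > 0 and every continuous F : ℝ → ℝ with compact support the limit lim_{n→∞} (1/(d_n ∧ d_n')) Σ_{j=1}^{d_n ∧ d_n'} F(σ_j(B_{n,t})) = α_t(F) exists, and that for every such F the limit lim_{t→∞} α_t(F) = α(F) exists. Then for every continuous F : ℝ → ℝ with compact support, lim_{n→∞} (1/(d_n ∧ d_n')) Σ_{j=1}^{d_n ∧ d_n'} F(σ_j(A_n)) = α(F). -/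

import Mathlib

open Filter MeasureTheory Matrix Set
open scoped Topology ENNReal

noncomputable def eigDesc {n : ℕ} (A : Matrix (Fin n) (Fin n) ℂ) (hA : A.IsHermitian) :
    Fin n → ℝ :=
  fun j => (hA.eigenvalues ∘ Tuple.sort hA.eigenvalues) j.rev

noncomputable def singVals {m n : ℕ} (A : Matrix (Fin m) (Fin n) ℂ) :
    Fin (min m n) → ℝ :=
  fun j => Real.sqrt (eigDesc (Aᴴ * A) (Matrix.isHermitian_conjTranspose_mul_self A)
    (Fin.castLE (min_le_right m n) j))

noncomputable def specNorm {m n : ℕ} (A : Matrix (Fin m) (Fin n) ℂ) : ℝ :=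
  ‖LinearMap.toContinuousLinearMap (Matrix.toEuclideanLin A)‖
def IsACS (d d' : ℕ → ℕ)
    (A : (n : ℕ) → Matrix (Fin (d n)) (Fin (d' n)) ℂ)
    (B : ℝ → (n : ℕ) → Matrix (Fin (d n)) (Fin (d' n)) ℂ) : Prop :=
  ∃ (nt : ℝ → ℕ) (c ω : ℝ → ℝ),
    Tendsto c atTop (𝓝 0) ∧ Tendsto ω atTop (𝓝 0) ∧
    ∀ t : ℝ, 0 < t → ∀ n : ℕ, nt t < n →
      ∃ R N : Matrix (Fin (d n)) (Fin (d' n)) ℂ,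
        A n = B t n + R + N ∧
        (R.rank : ℝ) ≤ c t * ((min (d n) (d' n) : ℕ) : ℝ) ∧
        specNorm N ≤ ω t

/-!
Weyl-type interlacing: for `r = rank R`, `σ_{j+r}(X) - ‖N‖ ≤ σ_j(X + R + N) ≤ σ_{j-r}(X) + ‖N‖`,
by a Courant–Fischer dimension count (some nonzero vector lies in the span of the top `k + 1` right
singular vectors of `X + R + N`, in the span of the bottom `n - j` ones of `X`, and in `ker R`).

Write `A_n = B_{n,t} + R + N` and cap all singular values at a point `T` beyond the support of
`F`. At index `j` the capped singular values of `A_n` and `B_{n,t}` then differ by at most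
`‖N‖ + g_j`, where `g_j = s_{j-r} - s_{j+r}` is a gap of the capped sequence `s` of `B_{n,t}`, and
these gaps telescope to `∑ g_j ≤ 2 r T`. If `‖N‖ ≤ δ` for a modulus of uniform continuity `δ` of
`F`, index `j` contributes at most `ε + 2 ‖F‖_∞ g_j / δ`, so the singular-value means of `A_n`
and `B_{n,t}` differ by at most `ε + 4 ‖F‖_∞ T c(t) / δ` for all large `n`. A `3ε`-argument in
`t` and `n` concludes.
-/

open Module

section Dimension

variable {K V : Type*} [DivisionRing K] [AddCommGroup V] [Module K V] [FiniteDimensional K V]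

lemma Submodule.finrank_add_finrank_le_finrank_inf_add (s t : Submodule K V) :
    finrank K s + finrank K t ≤ finrank K ↥(s ⊓ t) + finrank K V := by
  rw [← Submodule.finrank_sup_add_finrank_inf_eq, add_comm (finrank K ↥(s ⊔ t))]
  exact Nat.add_le_add_left (Submodule.finrank_le _) _

lemma Submodule.exists_mem_inf_ne_zero_of_finrank_lt (s t : Submodule K V)
    (h : finrank K V < finrank K s + finrank K t) : ∃ x ∈ s ⊓ t, x ≠ 0 := by
  by_contra! hst
  have : Disjoint s t := Submodule.disjoint_def.mpr fun x hs ht => hst x ⟨hs, ht⟩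
  exact (Submodule.finrank_add_finrank_le_of_disjoint this).not_gt h

end Dimension

lemma OrthonormalBasis.mem_span_image_iff_repr_eq_zero {ι 𝕜 E : Type*} [Fintype ι] [RCLike 𝕜]
    [NormedAddCommGroup E] [InnerProductSpace 𝕜 E] (b : OrthonormalBasis ι 𝕜 E) {S : Set ι}
    {x : E} : x ∈ Submodule.span 𝕜 (b '' S) ↔ ∀ i ∉ S, b.repr x i = 0 := by
  rw [← b.coe_toBasis, Module.Basis.mem_span_image, Finsupp.support_subset_iff]
  simp [OrthonormalBasis.coe_toBasis_repr_apply]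

lemma OrthonormalBasis.finrank_span_image {ι 𝕜 E : Type*} [Fintype ι] [RCLike 𝕜]
    [NormedAddCommGroup E] [InnerProductSpace 𝕜 E] (b : OrthonormalBasis ι 𝕜 E) (S : Finset ι) :
    finrank 𝕜 (Submodule.span 𝕜 (b '' S)) = S.card := by
  have himg : ⇑b '' ↑S = Set.range (b ∘ ((↑) : S → ι)) := by ext; simp
  rw [himg, finrank_span_eq_card (b.orthonormal.linearIndependent.comp _ Subtype.val_injective)]
  simp

lemma Matrix.rank_neg {m n R : Type*} [Fintype n] [CommRing R] (A : Matrix m n R) :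
    (-A).rank = A.rank := by
  simpa using rank_smul_of_mem_nonZeroDivisors A (isUnit_one.neg (α := R)).mem_nonZeroDivisors

lemma sum_range_sub_add_le {u : ℕ → ℝ} {T : ℝ} (hu : ∀ i j, u i - u j ≤ T) (m k : ℕ) :
    ∑ j ∈ Finset.range m, (u j - u (j + k)) ≤ k * T := by
  induction k with
  | zero => simp
  | succ k ih =>
    have htel : ∑ j ∈ Finset.range m, (u (j + k) - u (j + (k + 1))) = u k - u (m + k) := by
      simpa only [zero_add, add_right_comm _ 1 k, add_assoc]
        using Finset.sum_range_sub' (fun j => u (j + k)) m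
    calc ∑ j ∈ Finset.range m, (u j - u (j + (k + 1)))
        = ∑ j ∈ Finset.range m, (u j - u (j + k))
          + ∑ j ∈ Finset.range m, (u (j + k) - u (j + (k + 1))) := by
          rw [← Finset.sum_add_distrib]
          simp
      _ ≤ k * T + T := add_le_add ih (htel ▸ hu _ _)
      _ = (k + 1 : ℕ) * T := by push_cast; ring

/-- Small gaps `g` are handled by the modulus of continuity, large ones by `2K ≤ 2K g / δ`. -/
lemma abs_sub_le_of_modulus {F : ℝ → ℝ} {K δ ε g x y : ℝ} (hK : ∀ x, |F x| ≤ K) (hδ : 0 < δ)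
    (hmod : ∀ x y, |x - y| ≤ 2 * δ → |F x - F y| ≤ ε) (hg : 0 ≤ g) (hxy : |x - y| ≤ δ + g) :
    |F x - F y| ≤ ε + 2 * K / δ * g := by
  have hK₀ : 0 ≤ K := (abs_nonneg _).trans (hK 0)
  have hε : 0 ≤ ε := (abs_nonneg _).trans (hmod x x (by simp [hδ.le]))
  rcases le_or_gt g δ with hgδ | hgδ
  · have : 0 ≤ 2 * K / δ * g := by positivity
    linarith [hmod x y (by linarith)]
  · calc |F x - F y| ≤ |F x| + |F y| := abs_sub _ _
      _ ≤ 2 * K / δ * δ := by rw [div_mul_cancel₀ _ hδ.ne']; linarith [hK x, hK y]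
      _ ≤ 2 * K / δ * g := by gcongr
      _ ≤ ε + 2 * K / δ * g := le_add_of_nonneg_left hε

lemma HasCompactSupport.exists_nonneg_forall_le_eq_zero {M : Type*} [Zero M] {F : ℝ → M}
    (hFc : HasCompactSupport F) : ∃ T, 0 ≤ T ∧ ∀ x, T ≤ x → F x = 0 := by
  obtain ⟨b, hb⟩ := hFc.isCompact.bddAbove
  refine ⟨max b 0 + 1, by positivity, fun x hx => image_eq_zero_of_notMem_tsupport fun hxF => ?_⟩
  linarith [hb hxF, le_max_left b 0]

lemma UniformContinuous.exists_pos_forall_abs_sub_le {F : ℝ → ℝ} (hF : UniformContinuous F)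
    {ε : ℝ} (hε : 0 < ε) : ∃ δ > 0, ∀ x y, |x - y| ≤ 2 * δ → |F x - F y| ≤ ε := by
  obtain ⟨δ, hδ, h⟩ := Metric.uniformContinuous_iff.mp hF ε hε
  refine ⟨δ / 4, by positivity, fun x y hxy => ?_⟩
  have hFxy := h (a := x) (b := y) (by rw [Real.dist_eq]; linarith)
  rw [Real.dist_eq] at hFxy
  exact hFxy.le

lemma tendsto_of_forall_eventually_dist_le {ι κ E : Type*} [PseudoMetricSpace E]
    {l : Filter ι} {l' : Filter κ} [l'.NeBot] {a : ι → E} {b : κ → ι → E} {β : κ → E} {L : E}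
    (hb : ∀ᶠ t in l', Tendsto (b t) l (𝓝 (β t))) (hβ : Tendsto β l' (𝓝 L))
    (hab : ∀ ε > 0, ∀ᶠ t in l', ∀ᶠ n in l, dist (a n) (b t n) ≤ ε) : Tendsto a l (𝓝 L) := by
  refine Metric.tendsto_nhds.mpr fun ε hε => ?_
  obtain ⟨t, hbt, hβt, habt⟩ :=
    (hb.and ((Metric.tendsto_nhds.mp hβ (ε / 3) (by positivity)).and
      (hab (ε / 3) (by positivity)))).exists
  filter_upwards [habt, Metric.tendsto_nhds.mp hbt (ε / 3) (by positivity)] with n h₁ h₂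
  calc dist (a n) L ≤ dist (a n) (b t n) + dist (b t n) (β t) + dist (β t) L :=
        dist_triangle4 _ _ _ _
    _ < ε := by linarith

section SingularValues

variable {m n : ℕ}

lemma eigDesc_antitone {M : Matrix (Fin n) (Fin n) ℂ} (hM : M.IsHermitian) :
    Antitone (eigDesc M hM) :=
  fun _ _ hij => Tuple.monotone_sort hM.eigenvalues (Fin.rev_le_rev.mpr hij)

noncomputable def eigDescBasis {M : Matrix (Fin n) (Fin n) ℂ} (hM : M.IsHermitian) :
    OrthonormalBasis (Fin n) ℂ (EuclideanSpace ℂ (Fin n)) :=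
  hM.eigenvectorBasis.reindex (Fin.revPerm.trans (Tuple.sort hM.eigenvalues)).symm

lemma toEuclideanLin_eigDescBasis {M : Matrix (Fin n) (Fin n) ℂ} (hM : M.IsHermitian)
    (j : Fin n) :
    toEuclideanLin M (eigDescBasis hM j) = (eigDesc M hM j : ℂ) • eigDescBasis hM j := by
  apply (WithLp.equiv 2 _).injective
  simpa [eigDescBasis, eigDesc, OrthonormalBasis.reindex_apply, ← RCLike.real_smul_eq_coe_smul]
    using hM.mulVec_eigenvectorBasis (Tuple.sort hM.eigenvalues j.rev)

lemma eigDescBasis_repr_toEuclideanLin {M : Matrix (Fin n) (Fin n) ℂ} (hM : M.IsHermitian)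
    (x : EuclideanSpace ℂ (Fin n)) (i : Fin n) :
    (eigDescBasis hM).repr (toEuclideanLin M x) i
      = eigDesc M hM i * (eigDescBasis hM).repr x i := by
  rw [OrthonormalBasis.repr_apply_apply, OrthonormalBasis.repr_apply_apply,
    ← isSymmetric_toEuclideanLin_iff.mpr hM, toEuclideanLin_eigDescBasis, inner_smul_left,
    Complex.conj_ofReal]

noncomputable abbrev rightSingularBasis (X : Matrix (Fin m) (Fin n) ℂ) :
    OrthonormalBasis (Fin n) ℂ (EuclideanSpace ℂ (Fin n)) :=
  eigDescBasis (isHermitian_conjTranspose_mul_self X)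

lemma norm_toEuclideanLin_sq (X : Matrix (Fin m) (Fin n) ℂ) (x : EuclideanSpace ℂ (Fin n)) :
    ‖toEuclideanLin X x‖ ^ 2 = ∑ i, eigDesc (Xᴴ * X) (isHermitian_conjTranspose_mul_self X) i
      * ‖(rightSingularBasis X).repr x i‖ ^ 2 := by
  have hinner : (‖toEuclideanLin X x‖ ^ 2 : ℂ) = inner ℂ x (toEuclideanLin (Xᴴ * X) x) := by
    rw [toLpLin_mul_same, LinearMap.comp_apply, toEuclideanLin_conjTranspose_eq_adjoint,
      LinearMap.adjoint_inner_right, inner_self_eq_norm_sq_to_K]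
    rfl
  rw [← (rightSingularBasis X).repr.inner_map_map, PiLp.inner_apply] at hinner
  simp only [eigDescBasis_repr_toEuclideanLin, RCLike.inner_apply, mul_assoc,
    RCLike.mul_conj] at hinner
  exact Complex.ofReal_injective (by push_cast; exact hinner)

lemma eigDesc_conjTranspose_mul_self_nonneg (X : Matrix (Fin m) (Fin n) ℂ) (i : Fin n) :
    0 ≤ eigDesc (Xᴴ * X) (isHermitian_conjTranspose_mul_self X) i := by
  open scoped ComplexOrder in
  exact (posSemidef_conjTranspose_mul_self X).eigenvalues_nonneg _

lemma singVals_nonneg (X : Matrix (Fin m) (Fin n) ℂ) (j : Fin (min m n)) :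
    0 ≤ singVals X j :=
  Real.sqrt_nonneg _

lemma singVals_sq (X : Matrix (Fin m) (Fin n) ℂ) (j : Fin (min m n)) :
    singVals X j ^ 2 = eigDesc (Xᴴ * X) (isHermitian_conjTranspose_mul_self X)
      (Fin.castLE (min_le_right m n) j) :=
  Real.sq_sqrt (eigDesc_conjTranspose_mul_self_nonneg X _)

lemma singVals_antitone (X : Matrix (Fin m) (Fin n) ℂ) : Antitone (singVals X) :=
  fun _ _ hij => Real.sqrt_le_sqrt (eigDesc_antitone _ ((Fin.castLE_le_castLE_iff _).mpr hij))

end SingularValues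

section Weyl

variable {m n : ℕ}

lemma sum_mul_norm_sq_le_of_ne_zero {ι : Type*} (s : Finset ι) {f g : ι → ℝ} {c : ι → ℂ}
    (h : ∀ i, c i ≠ 0 → f i ≤ g i) : ∑ i ∈ s, f i * ‖c i‖ ^ 2 ≤ ∑ i ∈ s, g i * ‖c i‖ ^ 2 := by
  refine Finset.sum_le_sum fun i _ => ?_
  by_cases hc : c i = 0
  · simp [hc]
  · exact mul_le_mul_of_nonneg_right (h i hc) (sq_nonneg _)

lemma exists_finrank_eq_singVals_mul_le (X : Matrix (Fin m) (Fin n) ℂ) (k : Fin (min m n)) :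
    ∃ U : Submodule ℂ (EuclideanSpace ℂ (Fin n)), finrank ℂ U = k + 1 ∧
      ∀ x ∈ U, singVals X k * ‖x‖ ≤ ‖toEuclideanLin X x‖ := by
  set b := rightSingularBasis X
  set k' := Fin.castLE (min_le_right m n) k
  refine ⟨Submodule.span ℂ (b '' ↑(Finset.Iic k')), by rw [b.finrank_span_image, Fin.card_Iic]; rfl,
    fun x hx => ?_⟩
  rw [b.mem_span_image_iff_repr_eq_zero] at hx
  refine (sq_le_sq₀ (mul_nonneg (singVals_nonneg X k) (norm_nonneg x)) (norm_nonneg _)).mp ?_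
  rw [mul_pow, singVals_sq, norm_toEuclideanLin_sq, ← b.repr.norm_map, EuclideanSpace.norm_sq_eq,
    Finset.mul_sum]
  refine sum_mul_norm_sq_le_of_ne_zero _ fun i hi => eigDesc_antitone _ ?_
  by_contra hik
  exact hi (hx i (by simpa using hik))

lemma exists_finrank_eq_le_singVals_mul (X : Matrix (Fin m) (Fin n) ℂ) (j : Fin (min m n)) :
    ∃ W : Submodule ℂ (EuclideanSpace ℂ (Fin n)), finrank ℂ W = n - j ∧
      ∀ x ∈ W, ‖toEuclideanLin X x‖ ≤ singVals X j * ‖x‖ := by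
  set b := rightSingularBasis X
  set j' := Fin.castLE (min_le_right m n) j
  refine ⟨Submodule.span ℂ (b '' ↑(Finset.Ici j')), by rw [b.finrank_span_image, Fin.card_Ici]; rfl,
    fun x hx => ?_⟩
  rw [b.mem_span_image_iff_repr_eq_zero] at hx
  refine (sq_le_sq₀ (norm_nonneg _) (mul_nonneg (singVals_nonneg X j) (norm_nonneg x))).mp ?_
  rw [mul_pow, singVals_sq, norm_toEuclideanLin_sq, ← b.repr.norm_map, EuclideanSpace.norm_sq_eq,
    Finset.mul_sum]
  refine sum_mul_norm_sq_le_of_ne_zero _ fun i hi => eigDesc_antitone _ ?_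
  by_contra hij
  exact hi (hx i (by simpa using hij))

lemma finrank_ker_toEuclideanLin_add_rank (R : Matrix (Fin m) (Fin n) ℂ) :
    finrank ℂ (LinearMap.ker (toEuclideanLin R)) + R.rank = n := by
  rw [rank_eq_finrank_range_toLin R (PiLp.basisFun 2 ℂ (Fin m)) (PiLp.basisFun 2 ℂ (Fin n)),
    ← toLpLin_eq_toLin, add_comm, LinearMap.finrank_range_add_finrank_ker,
    finrank_euclideanSpace_fin]

lemma specNorm_nonneg (X : Matrix (Fin m) (Fin n) ℂ) : 0 ≤ specNorm X :=
  norm_nonneg _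

lemma specNorm_neg (X : Matrix (Fin m) (Fin n) ℂ) : specNorm (-X) = specNorm X := by
  rw [specNorm, map_neg, map_neg, norm_neg, specNorm]

lemma norm_toEuclideanLin_le_specNorm_mul (X : Matrix (Fin m) (Fin n) ℂ)
    (x : EuclideanSpace ℂ (Fin n)) : ‖toEuclideanLin X x‖ ≤ specNorm X * ‖x‖ :=
  (LinearMap.toContinuousLinearMap (toEuclideanLin X)).le_opNorm x

lemma singVals_add_add_le (X R N : Matrix (Fin m) (Fin n) ℂ) {j k : Fin (min m n)}
    (hjk : (j : ℕ) + R.rank ≤ k) : singVals (X + R + N) k ≤ singVals X j + specNorm N := by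
  obtain ⟨U, hU, hUX⟩ := exists_finrank_eq_singVals_mul_le (X + R + N) k
  obtain ⟨W, hW, hWX⟩ := exists_finrank_eq_le_singVals_mul X j
  have hker := finrank_ker_toEuclideanLin_add_rank R
  have hWK := Submodule.finrank_add_finrank_le_finrank_inf_add W (LinearMap.ker (toEuclideanLin R))
  rw [finrank_euclideanSpace_fin] at hWK
  obtain ⟨x, ⟨hxU, hxW, hxR⟩, hx0⟩ :=
    Submodule.exists_mem_inf_ne_zero_of_finrank_lt U (W ⊓ LinearMap.ker (toEuclideanLin R))
      (by rw [finrank_euclideanSpace_fin]; have := k.isLt; have := min_le_right m n; omega)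
  refine le_of_mul_le_mul_right ?_ (norm_pos_iff.mpr hx0)
  calc singVals (X + R + N) k * ‖x‖ ≤ ‖toEuclideanLin (X + R + N) x‖ := hUX x hxU
    _ = ‖toEuclideanLin X x + toEuclideanLin N x‖ := by
      have hRx : toEuclideanLin R x = 0 := hxR
      simp [hRx]
    _ ≤ singVals X j * ‖x‖ + specNorm N * ‖x‖ :=
      (norm_add_le _ _).trans (add_le_add (hWX x hxW) (norm_toEuclideanLin_le_specNorm_mul N x))
    _ = (singVals X j + specNorm N) * ‖x‖ := by ring

end Weyl

section CappedSingularValues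

variable {p q : ℕ}

/-- Extending the truncated singular values by `T` to the left and by `0` to the right makes
shifts of the index by `± rank R` meaningful everywhere. -/
noncomputable def capSeq (X : Matrix (Fin p) (Fin q) ℂ) (T : ℝ) (z : ℤ) : ℝ :=
  if z < 0 then T else if h : z.toNat < min p q then min (singVals X ⟨z.toNat, h⟩) T else 0

variable {T : ℝ}

lemma capSeq_nonneg (X : Matrix (Fin p) (Fin q) ℂ) (hT : 0 ≤ T) (z : ℤ) : 0 ≤ capSeq X T z := by
  unfold capSeq
  split_ifs
  exacts [hT, le_min (singVals_nonneg X _) hT, le_rfl]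

lemma capSeq_le (X : Matrix (Fin p) (Fin q) ℂ) (hT : 0 ≤ T) (z : ℤ) : capSeq X T z ≤ T := by
  unfold capSeq
  split_ifs
  exacts [le_rfl, min_le_right _ _, hT]

lemma capSeq_natCast (X : Matrix (Fin p) (Fin q) ℂ) (T : ℝ) {i : ℕ} (h : i < min p q) :
    capSeq X T i = min (singVals X ⟨i, h⟩) T := by
  simp [capSeq, h]

lemma capSeq_antitone (X : Matrix (Fin p) (Fin q) ℂ) (hT : 0 ≤ T) : Antitone (capSeq X T) := by
  intro z w hzw
  unfold capSeq
  split_ifs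
  all_goals first
    | omega
    | exact le_rfl
    | exact hT
    | exact min_le_right _ _
    | exact le_min (singVals_nonneg X _) hT
    | exact min_le_min_right T (singVals_antitone X (Fin.mk_le_mk.mpr (by omega)))

lemma min_singVals_le_capSeq_sub (B R N : Matrix (Fin p) (Fin q) ℂ) (j : Fin (min p q)) :
    min (singVals (B + R + N) j) T ≤ capSeq B T ((j : ℕ) - R.rank) + specNorm N := by
  rcases lt_or_ge (j : ℕ) R.rank with hj | hj
  · rw [capSeq, if_pos (by omega)]
    exact le_add_of_le_of_nonneg (min_le_right _ _) (specNorm_nonneg N)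
  · have hlt : (j : ℕ) - R.rank < min p q := by omega
    rw [show ((j : ℕ) : ℤ) - R.rank = (((j : ℕ) - R.rank : ℕ) : ℤ) by omega,
      capSeq_natCast B T hlt, ← min_add_add_right]
    exact min_le_min (singVals_add_add_le B R N (j := ⟨_, hlt⟩) (by simp; omega))
      (le_add_of_nonneg_right (specNorm_nonneg N))

lemma capSeq_add_le_min_singVals (B R N : Matrix (Fin p) (Fin q) ℂ) (hT : 0 ≤ T)
    (j : Fin (min p q)) :
    capSeq B T ((j : ℕ) + R.rank) ≤ min (singVals (B + R + N) j) T + specNorm N := by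
  rcases lt_or_ge ((j : ℕ) + R.rank) (min p q) with hj | hj
  · rw [show ((j : ℕ) : ℤ) + R.rank = (((j : ℕ) + R.rank : ℕ) : ℤ) by push_cast; rfl,
      capSeq_natCast B T hj, ← min_add_add_right]
    refine min_le_min ?_ (le_add_of_nonneg_right (specNorm_nonneg N))
    have h := singVals_add_add_le (B + R + N) (-R) (-N) (j := j) (k := ⟨_, hj⟩) (by simp [rank_neg])
    rwa [show B + R + N + -R + -N = B by abel, specNorm_neg] at h
  · rw [capSeq, if_neg (by omega), dif_neg (by omega)]
    exact add_nonneg (le_min (singVals_nonneg _ _) hT) (specNorm_nonneg N)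

lemma abs_min_singVals_sub_le (B R N : Matrix (Fin p) (Fin q) ℂ) (hT : 0 ≤ T)
    (j : Fin (min p q)) :
    |min (singVals (B + R + N) j) T - min (singVals B j) T|
      ≤ specNorm N + (capSeq B T ((j : ℕ) - R.rank) - capSeq B T ((j : ℕ) + R.rank)) := by
  have hA₁ := min_singVals_le_capSeq_sub (T := T) B R N j
  have hA₂ := capSeq_add_le_min_singVals B R N hT j
  have hB : capSeq B T (j : ℕ) = min (singVals B j) T := capSeq_natCast B T j.isLt
  have hB₁ := capSeq_antitone B hT (show ((j : ℕ) : ℤ) - R.rank ≤ (j : ℕ) by omega)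
  have hB₂ := capSeq_antitone B hT (show ((j : ℕ) : ℤ) ≤ (j : ℕ) + R.rank by omega)
  rw [abs_sub_le_iff]
  constructor <;> linarith

end CappedSingularValues

section SingularValueMeans

variable {p q : ℕ} {F : ℝ → ℝ} {K T δ ε : ℝ}

lemma abs_sum_singVals_add_add_sub_le (B R N : Matrix (Fin p) (Fin q) ℂ)
    (hK : ∀ x, |F x| ≤ K) (hT : 0 ≤ T) (hTF : ∀ x, T ≤ x → F x = 0) (hδ : 0 < δ)
    (hmod : ∀ x y, |x - y| ≤ 2 * δ → |F x - F y| ≤ ε) (hN : specNorm N ≤ δ) :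
    |∑ j, F (singVals (B + R + N) j) - ∑ j, F (singVals B j)|
      ≤ min p q * ε + 4 * K * T / δ * R.rank := by
  set s := capSeq B T
  set r := R.rank
  have hK₀ : 0 ≤ K := (abs_nonneg _).trans (hK 0)
  have hFT : ∀ x, F x = F (min x T) := fun x => by
    rcases le_total x T with h | h
    · rw [min_eq_left h]
    · rw [min_eq_right h, hTF x h, hTF T le_rfl]
  have hgap : ∀ j : Fin (min p q), 0 ≤ s ((j : ℕ) - r) - s ((j : ℕ) + r) := fun j =>
    sub_nonneg.mpr (capSeq_antitone B hT (by omega))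
  have hgaps : ∑ j : Fin (min p q), (s ((j : ℕ) - r) - s ((j : ℕ) + r)) ≤ 2 * r * T := by
    rw [Fin.sum_univ_eq_sum_range (fun j : ℕ => s (j - r) - s (j + r))]
    have hosc : ∀ i j : ℕ, s (i - r) - s (j - r) ≤ T := fun i j => by
      linarith [capSeq_le B hT (i - r), capSeq_nonneg B hT (j - r)]
    convert sum_range_sub_add_le hosc (min p q) (2 * r) using 3 with j
    · push_cast; ring_nf
    · push_cast; rfl
  calc |∑ j, F (singVals (B + R + N) j) - ∑ j, F (singVals B j)|
      ≤ ∑ j, |F (singVals (B + R + N) j) - F (singVals B j)| := by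
        rw [← Finset.sum_sub_distrib]
        exact Finset.abs_sum_le_sum_abs _ _
    _ ≤ ∑ j : Fin (min p q), (ε + 2 * K / δ * (s ((j : ℕ) - r) - s ((j : ℕ) + r))) := by
        refine Finset.sum_le_sum fun j _ => ?_
        rw [hFT (singVals (B + R + N) j), hFT (singVals B j)]
        exact abs_sub_le_of_modulus hK hδ hmod (hgap j)
          ((abs_min_singVals_sub_le B R N hT j).trans (by linarith))
    _ = min p q * ε + 2 * K / δ * ∑ j : Fin (min p q), (s ((j : ℕ) - r) - s ((j : ℕ) + r)) := by
        rw [Finset.sum_add_distrib, ← Finset.mul_sum]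
        simp
    _ ≤ min p q * ε + 2 * K / δ * (2 * r * T) := by gcongr
    _ = min p q * ε + 4 * K * T / δ * r := by ring

noncomputable def singValMean (F : ℝ → ℝ) (X : Matrix (Fin p) (Fin q) ℂ) : ℝ :=
  (1 / ((min p q : ℕ) : ℝ)) * ∑ j, F (singVals X j)

lemma abs_singValMean_add_add_sub_le (B R N : Matrix (Fin p) (Fin q) ℂ) {η : ℝ}
    (hK : ∀ x, |F x| ≤ K) (hT : 0 ≤ T) (hTF : ∀ x, T ≤ x → F x = 0) (hδ : 0 < δ)
    (hmod : ∀ x y, |x - y| ≤ 2 * δ → |F x - F y| ≤ ε) (hN : specNorm N ≤ δ)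
    (hR : (R.rank : ℝ) ≤ η * min p q) (hη : 0 ≤ η) :
    |singValMean F (B + R + N) - singValMean F B| ≤ ε + 4 * K * T / δ * η := by
  have hsum := abs_sum_singVals_add_add_sub_le B R N hK hT hTF hδ hmod hN
  have hK₀ : 0 ≤ K := (abs_nonneg _).trans (hK 0)
  have hε : 0 ≤ ε := (abs_nonneg _).trans (hmod 0 0 (by simp [hδ.le]))
  unfold singValMean
  rw [← mul_sub, abs_mul, abs_of_nonneg (by positivity)]
  rcases Nat.eq_zero_or_pos (min p q) with h0 | hpos
  · simp only [h0, CharP.cast_eq_zero, div_zero, zero_mul]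
    positivity
  · have hm : (0 : ℝ) < ((min p q : ℕ) : ℝ) := by exact_mod_cast hpos
    calc 1 / ((min p q : ℕ) : ℝ) * |∑ j, F (singVals (B + R + N) j) - ∑ j, F (singVals B j)|
        ≤ 1 / ((min p q : ℕ) : ℝ)
          * ((min p q : ℕ) * ε + 4 * K * T / δ * (η * (min p q : ℕ))) := by
          gcongr
          exact hsum.trans (by gcongr)
      _ = ε + 4 * K * T / δ * η := by field_simp

end SingularValueMeans

theorem IsACS.eventually_dist_singValMean_le {d d' : ℕ → ℕ}
    {A : (n : ℕ) → Matrix (Fin (d n)) (Fin (d' n)) ℂ}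
    {B : ℝ → (n : ℕ) → Matrix (Fin (d n)) (Fin (d' n)) ℂ} (hacs : IsACS d d' A B)
    {F : ℝ → ℝ} (hF : Continuous F) (hFc : HasCompactSupport F) {ε : ℝ} (hε : 0 < ε) :
    ∀ᶠ t in atTop, ∀ᶠ n in atTop, dist (singValMean F (A n)) (singValMean F (B t n)) ≤ ε := by
  obtain ⟨nt, c, ω, hc, hω, hdecomp⟩ := hacs
  obtain ⟨K, hK⟩ := hFc.exists_bound_of_continuous hF
  obtain ⟨T, hT, hTF⟩ := hFc.exists_nonneg_forall_le_eq_zero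
  obtain ⟨δ, hδ, hmod⟩ :=
    (hFc.uniformContinuous_of_continuous hF).exists_pos_forall_abs_sub_le (half_pos hε)
  have hcη : Tendsto (fun t => 4 * K * T / δ * |c t|) atTop (𝓝 0) := by
    simpa using hc.abs.const_mul (4 * K * T / δ)
  filter_upwards [eventually_gt_atTop 0, hω.eventually_lt_const hδ,
    hcη.eventually_lt_const (half_pos hε)] with t ht hωt hct
  filter_upwards [eventually_gt_atTop (nt t)] with n hn
  obtain ⟨R, N, hAn, hR, hN⟩ := hdecomp t ht n hn
  rw [hAn, Real.dist_eq]
  calc |singValMean F (B t n + R + N) - singValMean F (B t n)|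
      ≤ ε / 2 + 4 * K * T / δ * |c t| :=
        abs_singValMean_add_add_sub_le _ _ _ (fun x => (Real.norm_eq_abs _).symm ▸ hK x) hT hTF
          hδ hmod (hN.trans hωt.le)
          (hR.trans (mul_le_mul_of_nonneg_right (le_abs_self _) (Nat.cast_nonneg _)))
          (abs_nonneg _)
    _ ≤ ε := by linarith

theorem acs_singular_value_means_limit_general
    (d d' : ℕ → ℕ)
    (A : (n : ℕ) → Matrix (Fin (d n)) (Fin (d' n)) ℂ)
    (B : ℝ → (n : ℕ) → Matrix (Fin (d n)) (Fin (d' n)) ℂ)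
    (hacs : IsACS d d' A B)
    (α : ℝ → (ℝ → ℝ) → ℝ) (αlim : (ℝ → ℝ) → ℝ)
    (hαt : ∀ t : ℝ, 0 < t → ∀ F : ℝ → ℝ, Continuous F → HasCompactSupport F →
      Tendsto (fun n : ℕ => (1 / ((min (d n) (d' n) : ℕ) : ℝ)) *
        ∑ j, F (singVals (B t n) j)) atTop (𝓝 (α t F)))
    (hα : ∀ F : ℝ → ℝ, Continuous F → HasCompactSupport F →
      Tendsto (fun t : ℝ => α t F) atTop (𝓝 (αlim F)))
    (F : ℝ → ℝ) (hF : Continuous F) (hFc : HasCompactSupport F) :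
    Tendsto (fun n : ℕ => (1 / ((min (d n) (d' n) : ℕ) : ℝ)) *
      ∑ j, F (singVals (A n) j)) atTop (𝓝 (αlim F)) :=
  tendsto_of_forall_eventually_dist_le (b := fun t n => singValMean F (B t n))
    ((eventually_gt_atTop 0).mono fun t ht => hαt t ht F hF hFc) (hα F hF hFc)
    fun _ hε => hacs.eventually_dist_singValMean_le hF hFc hε

/-- If `{{B_{n,t}}}_{t>0}` is an a.c.s. for `{A_n}` and for every test
function `F` the singular-value means of `B_{n,t}` converge (in `n`) to `α_t(F)`, and
`α_t(F) → α(F)` as `t → ∞`, then the singular-value means of `A_n` converge to `α(F)`. -/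
theorem acs_singular_value_means_limit
    (d d' : ℕ → ℕ) (hd : StrictMono d) (hd' : StrictMono d')
    (A : (n : ℕ) → Matrix (Fin (d n)) (Fin (d' n)) ℂ)
    (B : ℝ → (n : ℕ) → Matrix (Fin (d n)) (Fin (d' n)) ℂ)
    (hacs : IsACS d d' A B)
    (α : ℝ → (ℝ → ℝ) → ℝ) (αlim : (ℝ → ℝ) → ℝ)
    (hαt : ∀ t : ℝ, 0 < t → ∀ F : ℝ → ℝ, Continuous F → HasCompactSupport F →
      Tendsto (fun n : ℕ => (1 / ((min (d n) (d' n) : ℕ) : ℝ)) *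
        ∑ j, F (singVals (B t n) j)) atTop (𝓝 (α t F)))
    (hα : ∀ F : ℝ → ℝ, Continuous F → HasCompactSupport F →
      Tendsto (fun t : ℝ => α t F) atTop (𝓝 (αlim F)))
    (F : ℝ → ℝ) (hF : Continuous F) (hFc : HasCompactSupport F) :
    Tendsto (fun n : ℕ => (1 / ((min (d n) (d' n) : ℕ) : ℝ)) *
      ∑ j, F (singVals (A n) j)) atTop (𝓝 (αlim F)) :=
  acs_singular_value_means_limit_general d d' A B hacs α αlim hαt hα F hF hFc
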